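/- For any Boolean function f : {0,1}^n → {0,1}, the total influence satisfies Inf(f) ≤ Cert(f). -/

import Mathlib

open Finset

variable {ι : Type*} [Fintype ι] [DecidableEq ι]

/-- `x` with its `i`-th bit flipped. -/
def flipAt (x : ι → Bool) (i : ι) : ι → Bool := Function.update x i (!x i)

/-- `S` is a certificate for `f`'s value at `x`. -/
def IsCert (f : (ι → Bool) → Bool) (x : ι → Bool) (S : Finset ι) : Prop :=
  ∀ y : ι → Bool, (∀ i ∈ S, y i = x i) → f y = f x

/-- Certificate complexity of `f` at `x`: minimum size of a certificate. -/
noncomputable def certAt (f : (ι → Bool) → Bool) (x : ι → Bool) : ℕ :=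
  sInf {k | ∃ S : Finset ι, IsCert f x S ∧ S.card = k}

/-- Certificate complexity of `f`. -/
noncomputable def certC (f : (ι → Bool) → Bool) : ℕ :=
  sSup {k | ∃ x : ι → Bool, certAt f x = k}

/-- Influence of coordinate `i` on `f` (uniform distribution). -/
noncomputable def influence (f : (ι → Bool) → Bool) (i : ι) : ℝ :=
  ((univ.filter fun x : ι → Bool => f (flipAt x i) ≠ f x).card : ℝ) / 2 ^ Fintype.card ι

/-- Total influence of `f`. -/
noncomputable def totalInf (f : (ι → Bool) → Bool) : ℝ := ∑ i : ι, influence f i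

/-- `Pr_{x uniform}[f(x) = b]`. -/
noncomputable def probEq (f : (ι → Bool) → Bool) (b : Bool) : ℝ :=
  ((univ.filter fun x : ι → Bool => f x = b).card : ℝ) / 2 ^ Fintype.card ι

/-- Variance of `f`: `Pr[f = 0] * Pr[f = 1]`. -/
noncomputable def fvar (f : (ι → Bool) → Bool) : ℝ := probEq f false * probEq f true


/-! The influence of coordinate `i` counts the inputs `x` at which flipping `i` changes `f`, so
by double counting `2ⁿ · Inf(f)` is the sum over `x` of the sensitivity `s(f, x)`, the number of
coordinates whose flip changes `f x`. A sensitive coordinate of `x` must be fixed by every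
certificate at `x`, so `s(f, x) ≤ C(f, x) ≤ C(f)`, and averaging over `x` gives the bound. -/

noncomputable def sensitivityAt (f : (ι → Bool) → Bool) (x : ι → Bool) : ℕ :=
  #{i | f (flipAt x i) ≠ f x}

theorem sum_sensitivityAt (f : (ι → Bool) → Bool) :
    ∑ x, sensitivityAt f x = ∑ i : ι, #{x : ι → Bool | f (flipAt x i) ≠ f x} := by
  simp only [sensitivityAt, card_filter]
  exact sum_comm

theorem totalInf_eq_sum_sensitivityAt_div (f : (ι → Bool) → Bool) :
    totalInf f = (∑ x, sensitivityAt f x : ℕ) / (2 : ℝ) ^ Fintype.card ι := by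
  rw [sum_sensitivityAt, totalInf, Nat.cast_sum, sum_div]
  rfl

omit [Fintype ι] in
theorem IsCert.mem_of_flipAt_ne {f : (ι → Bool) → Bool} {x : ι → Bool} {S : Finset ι}
    (hS : IsCert f x S) {i : ι} (hi : f (flipAt x i) ≠ f x) : i ∈ S := by
  by_contra hiS
  refine hi (hS _ fun j hj => ?_)
  rw [flipAt, Function.update_of_ne (ne_of_mem_of_not_mem hj hiS)]

omit [DecidableEq ι] in
theorem isCert_univ (f : (ι → Bool) → Bool) (x : ι → Bool) : IsCert f x univ := by
  intro y hy
  rw [funext fun i => hy i (mem_univ i)]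

omit [DecidableEq ι] in
theorem exists_isCert_card_eq_certAt (f : (ι → Bool) → Bool) (x : ι → Bool) :
    ∃ S : Finset ι, IsCert f x S ∧ #S = certAt f x :=
  Nat.sInf_mem (s := {k | ∃ S : Finset ι, IsCert f x S ∧ #S = k})
    ⟨_, univ, isCert_univ f x, rfl⟩

omit [DecidableEq ι] in
theorem certAt_le_card (f : (ι → Bool) → Bool) (x : ι → Bool) :
    certAt f x ≤ Fintype.card ι :=
  Nat.sInf_le ⟨univ, isCert_univ f x, card_univ⟩

omit [DecidableEq ι] in
theorem certAt_le_certC (f : (ι → Bool) → Bool) (x : ι → Bool) : certAt f x ≤ certC f :=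
  le_csSup ⟨Fintype.card ι, by rintro _ ⟨y, rfl⟩; exact certAt_le_card f y⟩ ⟨x, rfl⟩

theorem sensitivityAt_le_certAt (f : (ι → Bool) → Bool) (x : ι → Bool) :
    sensitivityAt f x ≤ certAt f x := by
  obtain ⟨S, hS, hcard⟩ := exists_isCert_card_eq_certAt f x
  rw [← hcard]
  exact card_le_card fun i hi => hS.mem_of_flipAt_ne (mem_filter.1 hi).2

theorem sum_sensitivityAt_le (f : (ι → Bool) → Bool) :
    ∑ x, sensitivityAt f x ≤ 2 ^ Fintype.card ι * certC f := by
  calc ∑ x, sensitivityAt f x ≤ #(univ : Finset (ι → Bool)) • certC f :=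
        sum_le_card_nsmul _ _ _ fun x _ =>
          (sensitivityAt_le_certAt f x).trans (certAt_le_certC f x)
    _ = 2 ^ Fintype.card ι * certC f := by
        rw [card_univ, Fintype.card_fun, Fintype.card_bool, smul_eq_mul]

theorem stmt5 {ι : Type*} [Fintype ι] [DecidableEq ι] (f : (ι → Bool) → Bool) :
    totalInf f ≤ certC f := by
  rw [totalInf_eq_sum_sensitivityAt_div, div_le_iff₀ (by positivity), mul_comm]
  exact_mod_cast sum_sensitivityAt_le f
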